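/- arXiv:0710.1316 — 4 statements merged into one kernel-verified Lean document; each statement's English description precedes it below -/
import Mathlib

section
/- Let A be a free finitely generated abelian group and R an integral domain. If W : A → R satisfies W(0) = 0 and the elliptic net relation W(p+q+s)W(p−q)W(r+s)W(r) + W(q+r+s)W(q−r)W(p+s)W(p) + W(r+p+s)W(r−p)W(q+s)W(q) = 0 for all p, q, r, s ∈ A, then W(−z) = −W(z) for all z ∈ A. -/
/-- An elliptic net: a map `W : A → R` with `W 0 = 0` satisfying the elliptic net relation. -/
def IsEllipticNetOnGroup {A R : Type*} [AddCommGroup A] [CommRing R] (W : A → R) : Prop :=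
  W 0 = 0 ∧ ∀ p q r s : A,
    W (p + q + s) * W (p - q) * W (r + s) * W r +
    W (q + r + s) * W (q - r) * W (p + s) * W p +
    W (r + p + s) * W (r - p) * W (q + s) * W q = 0

/-!
Taking `p = q = z` and `r = s = 0` in the elliptic net relation leaves
`W(z)³ (W(z) + W(-z)) = 0`, and the same with `-z` in place of `z` gives
`W(-z)³ (W(z) + W(-z)) = 0`. In a domain, if `W(z) + W(-z) ≠ 0` both `W(z)` and `W(-z)` vanish,
which is absurd.
-/

theorem eq_neg_of_pow_mul_add_eq_zero {R : Type*} [CommRing R] [NoZeroDivisors R] {a b : R}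
    {n : ℕ} (hn : n ≠ 0) (ha : a ^ n * (a + b) = 0) (hb : b ^ n * (a + b) = 0) : b = -a := by
  rw [eq_neg_iff_add_eq_zero, add_comm]
  by_contra hab
  have ha0 : a = 0 := pow_eq_zero_iff hn |>.mp ((mul_eq_zero.mp ha).resolve_right hab)
  have hb0 : b = 0 := pow_eq_zero_iff hn |>.mp ((mul_eq_zero.mp hb).resolve_right hab)
  simp [ha0, hb0] at hab

namespace IsEllipticNetOnGroup

variable {A R : Type*} [AddCommGroup A] [CommRing R] {W : A → R}

theorem pow_mul_add_neg_eq_zero (hW : IsEllipticNetOnGroup W) (z : A) :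
    W z ^ 3 * (W z + W (-z)) = 0 := by
  obtain ⟨h0, hrel⟩ := hW
  have h := hrel z z 0 0
  simp only [add_zero, zero_add, sub_self, h0, zero_sub, sub_zero] at h
  linear_combination h

theorem neg_apply [NoZeroDivisors R] (hW : IsEllipticNetOnGroup W) (z : A) :
    W (-z) = -W z := by
  refine eq_neg_of_pow_mul_add_eq_zero three_ne_zero (hW.pow_mul_add_neg_eq_zero z) ?_
  simpa only [neg_neg, add_comm] using hW.pow_mul_add_neg_eq_zero (-z)

end IsEllipticNetOnGroup

theorem ellnet_neg_general {A R : Type*} [AddCommGroup A]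
    [CommRing R] [IsDomain R] (W : A → R) (hW : IsEllipticNetOnGroup W) :
    ∀ z : A, W (-z) = -W z :=
  hW.neg_apply

theorem ellnet_neg {A R : Type*} [AddCommGroup A] [Module.Free ℤ A] [Module.Finite ℤ A]
    [CommRing R] [IsDomain R] (W : A → R) (hW : IsEllipticNetOnGroup W) :
    ∀ z : A, W (-z) = -W z :=
  ellnet_neg_general W hW
end

section
/- The map W : ℤ → ℤ defined by W(v) = F_{2v} for v > 0, W(v) = −F_{−2v} for v < 0, and W(0) = 0, where F_k denotes the k-th Fibonacci number, is an elliptic net. -/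
/-- An elliptic net: a map `W : A → R` with `W 0 = 0` satisfying the elliptic net relation. -/
def IsEllipticNetMap {A R : Type*} [AddCommGroup A] [CommRing R] (W : A → R) : Prop :=
  W 0 = 0 ∧ ∀ p q r s : A,
    W (p + q + s) * W (p - q) * W (r + s) * W r +
    W (q + r + s) * W (q - r) * W (p + s) * W p +
    W (r + p + s) * W (r - p) * W (q + s) * W q = 0

/-- W(v) = F_{2v} for v > 0, W(v) = -F_{-2v} for v < 0, W(0) = 0. -/
def fibNet (v : ℤ) : ℤ :=
  if 0 < v then (Nat.fib (2 * v).toNat : ℤ)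
  else if v < 0 then -(Nat.fib (2 * (-v)).toNat : ℤ)
  else 0

/-! By Binet's formula `√5 · fibNet v = x ^ v - x ^ (-v)` with `x = φ²`, and for any nonzero `x`
the map `v ↦ x ^ v - x ^ (-v)` is an elliptic net (a rational-function identity in `x ^ p`, `x ^ q`,
`x ^ r`, `x ^ s`). The relation is homogeneous of degree four, so it survives division by `√5`,
and it descends from `ℝ` to `ℤ` because the cast is injective. -/

namespace IsEllipticNetMap

variable {A R : Type*} [AddCommGroup A] [CommRing R] {W : A → R}

theorem of_comp_injective {S : Type*} [CommRing S] (f : R →+* S) (hf : Function.Injective f)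
    (h : IsEllipticNetMap (f ∘ W)) : IsEllipticNetMap W := by
  obtain ⟨h0, hrel⟩ := h
  refine ⟨hf (by simpa using h0), fun p q r s => hf ?_⟩
  simpa using hrel p q r s

theorem of_mul_const [NoZeroDivisors R] {c : R} (hc : c ≠ 0)
    (h : IsEllipticNetMap fun a => W a * c) : IsEllipticNetMap W := by
  obtain ⟨h0, hrel⟩ := h
  refine ⟨(mul_eq_zero.mp h0).resolve_right hc, fun p q r s => ?_⟩
  refine (mul_eq_zero.mp (?_ : _ * c ^ 4 = 0)).resolve_right (pow_ne_zero 4 hc)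
  linear_combination hrel p q r s

end IsEllipticNetMap

theorem isEllipticNetMap_zpow_sub_zpow_neg {K : Type*} [Field K] {x : K} (hx : x ≠ 0) :
    IsEllipticNetMap fun v : ℤ => x ^ v - x ^ (-v) := by
  refine ⟨by simp, fun p q r s => ?_⟩
  have := zpow_ne_zero p hx
  have := zpow_ne_zero q hx
  have := zpow_ne_zero r hx
  have := zpow_ne_zero s hx
  simp only [neg_add, neg_sub, zpow_add₀ hx, zpow_sub₀ hx, zpow_neg]
  field_simp
  ring

theorem fibNet_natCast (n : ℕ) : fibNet n = Nat.fib (2 * n) := by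
  rcases n.eq_zero_or_pos with rfl | hn
  · simp [fibNet]
  · simp [fibNet, hn, show (2 * (n : ℤ)).toNat = 2 * n by omega]

theorem fibNet_neg (v : ℤ) : fibNet (-v) = -fibNet v := by
  unfold fibNet
  rcases lt_trichotomy v 0 with hv | rfl | hv
  · simp [hv, hv.not_gt]
  · simp
  · simp [hv, hv.not_gt]

open Real in
theorem fibNet_mul_sqrt_five (v : ℤ) :
    (fibNet v : ℝ) * √5 = (goldenRatio ^ 2) ^ v - (goldenRatio ^ 2) ^ (-v) := by
  have hnat (n : ℕ) : (fibNet n : ℝ) * √5 = (goldenRatio ^ 2) ^ n - ((goldenRatio ^ 2) ^ n)⁻¹ := by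
    rw [← inv_pow, ← inv_pow, inv_goldenRatio, fibNet_natCast, Int.cast_natCast, coe_fib_eq, neg_sq,
      ← pow_mul, ← pow_mul]
    field_simp
  obtain ⟨n, rfl | rfl⟩ := Int.eq_nat_or_neg v
  · rw [zpow_neg, zpow_natCast, hnat]
  · rw [fibNet_neg, Int.cast_neg, neg_mul, hnat, neg_neg, zpow_neg, zpow_natCast]
    ring

open Real in
theorem ellnet_fib : IsEllipticNetMap fibNet := by
  apply IsEllipticNetMap.of_comp_injective (Int.castRingHom ℝ) Int.cast_injective
  apply IsEllipticNetMap.of_mul_const (c := √5) (by positivity)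
  simpa only [Function.comp_apply, eq_intCast, fibNet_mul_sqrt_five]
    using isEllipticNetMap_zpow_sub_zpow_neg (x := goldenRatio ^ 2) (by positivity)
end

section
/- Let W : ℤ → ℚ be an elliptic net with W(1) = 1, W(2) ≠ 0, W(2), W(3), W(4) integers, and W(2) dividing W(4). Then W(n) is an integer for all n ∈ ℤ. -/
/-- An elliptic net: a map `W : A → R` with `W 0 = 0` satisfying the elliptic net relation. -/
def IsEllipticNetRel {A R : Type*} [AddCommGroup A] [CommRing R] (W : A → R) : Prop :=
  W 0 = 0 ∧ ∀ p q r s : A,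
    W (p + q + s) * W (p - q) * W (r + s) * W r +
    W (q + r + s) * W (q - r) * W (p + s) * W p +
    W (r + p + s) * W (r - p) * W (q + s) * W q = 0

/-!
The net relation specialised to `(p, q, r, s) = (n + 1, n, 1, 0)` and `(n + 1, n - 1, 1, 0)`
gives the classical duplication formulas expressing `W (2n + 1)` and `W (2n) * W 2` through
`W (n - 2), …, W (n + 2)`. Strong induction then shows that `W n` lies in any subring containing
`W 2`, `W 3` and `W 4 / W 2`, provided one carries along the stronger fact that `W n / W 2` lies
there for even `n`: this makes the division by `W 2 ^ 2` in the even formula harmless, since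
either `W n, W (n ± 2)` or `W (n ± 1)` are all even-indexed.
-/

namespace IsEllipticNetRel

section CommRing

variable {R : Type*} [CommRing R] [IsDomain R] {W : ℤ → R}

theorem apply_neg (hW : IsEllipticNetRel W) (h1 : W 1 ≠ 0) (n : ℤ) : W (-n) = -W n := by
  have key : ∀ p : ℤ, W 1 ^ 2 * (W p * (W p + W (-p))) = 0 := fun p => by
    have h := hW.2 p 1 0 0
    simp only [add_zero, zero_add, sub_zero, zero_sub, hW.1, mul_zero] at h
    linear_combination h
  have hsum : W 1 ^ 2 * (W n + W (-n)) ^ 2 = 0 := by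
    have := key (-n)
    rw [neg_neg] at this
    linear_combination key n + this
  have : W n + W (-n) = 0 := by simpa [h1] using hsum
  linear_combination this

theorem apply_two_mul_add_one (hW : IsEllipticNetRel W) (h1 : W 1 = 1) (n : ℤ) :
    W (2 * n + 1) = W (n + 2) * W n ^ 3 - W (n - 1) * W (n + 1) ^ 3 := by
  have h := hW.2 (n + 1) n 1 0
  rw [show n + 1 + n + 0 = 2 * n + 1 by ring, show 1 + (n + 1) + 0 = n + 2 by ring,
    show 1 - (n + 1) = -n by ring, hW.apply_neg (h1 ▸ one_ne_zero)] at h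
  simp only [add_sub_cancel_left, add_zero, h1] at h
  linear_combination h

theorem apply_two_mul_mul_apply_two (hW : IsEllipticNetRel W) (h1 : W 1 = 1) (n : ℤ) :
    W (2 * n) * W 2 = W n * (W (n + 2) * W (n - 1) ^ 2 - W (n - 2) * W (n + 1) ^ 2) := by
  have h := hW.2 (n + 1) (n - 1) 1 0
  rw [show n + 1 + (n - 1) + 0 = 2 * n by ring, show n + 1 - (n - 1) = 2 by ring,
    show n - 1 + 1 + 0 = n by ring, show n - 1 - 1 = n - 2 by ring,
    show 1 + (n + 1) + 0 = n + 2 by ring, show 1 - (n + 1) = -n by ring,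
    hW.apply_neg (h1 ▸ one_ne_zero)] at h
  simp only [add_zero, h1] at h
  linear_combination h

end CommRing

section Subring

variable {K : Type*} [Field K] {W : ℤ → K} {S : Subring K}

variable (S) in
def MemSubringAt (W : ℤ → K) (n : ℤ) : Prop :=
  W n ∈ S ∧ (Even n → W n / W 2 ∈ S)

theorem apply_two_mul_add_one_mem (hW : IsEllipticNetRel W) (h1 : W 1 = 1) {k : ℤ}
    (hk : ∀ j, k - 1 ≤ j → j ≤ k + 2 → W j ∈ S) : W (2 * k + 1) ∈ S := by
  rw [hW.apply_two_mul_add_one h1]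
  exact sub_mem
    (mul_mem (hk _ (by omega) le_rfl) (pow_mem (hk _ (by omega) (by omega)) 3))
    (mul_mem (hk _ le_rfl (by omega)) (pow_mem (hk _ (by omega) (by omega)) 3))

theorem apply_two_mul_div_mem (hW : IsEllipticNetRel W) (h1 : W 1 = 1) (h2 : W 2 ≠ 0) {k : ℤ}
    (hk : ∀ j, k - 2 ≤ j → j ≤ k + 2 → MemSubringAt S W j) : W (2 * k) / W 2 ∈ S := by
  have hdup : W (2 * k) / W 2 =
      W k * (W (k + 2) * W (k - 1) ^ 2 - W (k - 2) * W (k + 1) ^ 2) / W 2 ^ 2 := by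
    rw [← hW.apply_two_mul_mul_apply_two h1]
    field_simp
  have mem (j : ℤ) (hj₁ : k - 2 ≤ j := by omega) (hj₂ : j ≤ k + 2 := by omega) : W j ∈ S :=
    (hk j hj₁ hj₂).1
  have div_mem (j : ℤ) (hj : Even j) (hj₁ : k - 2 ≤ j := by omega) (hj₂ : j ≤ k + 2 := by omega) :
      W j / W 2 ∈ S :=
    (hk j hj₁ hj₂).2 hj
  rcases Int.even_or_odd k with hk | hk
  · rw [hdup, show W k * (W (k + 2) * W (k - 1) ^ 2 - W (k - 2) * W (k + 1) ^ 2) / W 2 ^ 2 =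
        W k / W 2 * (W (k + 2) / W 2 * W (k - 1) ^ 2 - W (k - 2) / W 2 * W (k + 1) ^ 2) by ring]
    exact mul_mem (div_mem k hk) (sub_mem
      (mul_mem (div_mem _ (hk.add even_two)) (pow_mem (mem _) 2))
      (mul_mem (div_mem _ (hk.sub even_two)) (pow_mem (mem _) 2)))
  · rw [hdup, show W k * (W (k + 2) * W (k - 1) ^ 2 - W (k - 2) * W (k + 1) ^ 2) / W 2 ^ 2 =
        W k * (W (k + 2) * (W (k - 1) / W 2) ^ 2 - W (k - 2) * (W (k + 1) / W 2) ^ 2) by ring]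
    exact mul_mem (mem k) (sub_mem
      (mul_mem (mem _) (pow_mem (div_mem _ (hk.sub_odd odd_one)) 2))
      (mul_mem (mem _) (pow_mem (div_mem _ hk.add_one) 2)))

theorem memSubringAt_of_forall_lt (hW : IsEllipticNetRel W) (h1 : W 1 = 1) (h2ne : W 2 ≠ 0)
    (h2 : W 2 ∈ S) {n : ℤ} (hn : 5 ≤ n) (ih : ∀ j, 0 ≤ j → j < n → MemSubringAt S W j) :
    MemSubringAt S W n := by
  obtain ⟨k, rfl | rfl⟩ := Int.even_or_odd' n
  · have hdiv := hW.apply_two_mul_div_mem (k := k) h1 h2ne fun j _ _ => ih j (by omega) (by omega)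
    refine ⟨?_, fun _ => hdiv⟩
    rw [← mul_div_cancel₀ (W (2 * k)) h2ne]
    exact mul_mem h2 hdiv
  · exact ⟨hW.apply_two_mul_add_one_mem h1 fun j _ _ => (ih j (by omega) (by omega)).1,
      fun h => absurd h (Int.not_even_two_mul_add_one k)⟩

theorem memSubringAt_natCast (hW : IsEllipticNetRel W) (h1 : W 1 = 1) (h2ne : W 2 ≠ 0)
    (h2 : W 2 ∈ S) (h3 : W 3 ∈ S) (h4 : W 4 / W 2 ∈ S) (n : ℕ) : MemSubringAt S W n := by
  induction n using Nat.strong_induction_on with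
  | _ n ih =>
  rcases lt_or_ge n 5 with hn | hn
  · interval_cases n <;> simp only [MemSubringAt, Nat.cast_ofNat, Nat.cast_zero, Nat.cast_one]
    · simp [hW.1]
    · simp [h1]
    · simp [h2, h2ne]
    · exact ⟨h3, fun h => absurd h (by decide)⟩
    · refine ⟨?_, fun _ => h4⟩
      rw [← mul_div_cancel₀ (W 4) h2ne]
      exact mul_mem h2 h4
  · refine hW.memSubringAt_of_forall_lt h1 h2ne h2 (by omega) fun j hj hjn => ?_
    lift j to ℕ using hj
    exact ih j (by omega)

theorem apply_mem (hW : IsEllipticNetRel W) (h1 : W 1 = 1) (h2ne : W 2 ≠ 0)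
    (h2 : W 2 ∈ S) (h3 : W 3 ∈ S) (h4 : W 4 / W 2 ∈ S) (n : ℤ) : W n ∈ S := by
  rcases Int.natAbs_eq n with h | h <;> rw [h]
  · exact (hW.memSubringAt_natCast h1 h2ne h2 h3 h4 _).1
  · rw [hW.apply_neg (h1 ▸ one_ne_zero)]
    exact neg_mem (hW.memSubringAt_natCast h1 h2ne h2 h3 h4 _).1

end Subring

end IsEllipticNetRel

theorem ellnet_integrality_general (W : ℤ → ℚ) (hW : IsEllipticNetRel W)
    (h1 : W 1 = 1) (h2ne : W 2 ≠ 0)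
    (h2 : ∃ a : ℤ, W 2 = a) (h3 : ∃ b : ℤ, W 3 = b)
    (hdvd : ∃ d : ℤ, W 4 = W 2 * d) :
    ∀ n : ℤ, ∃ m : ℤ, W n = m := by
  obtain ⟨a, ha⟩ := h2
  obtain ⟨b, hb⟩ := h3
  obtain ⟨d, hd⟩ := hdvd
  have h4 : W 4 / W 2 = d := by rw [hd, mul_div_cancel_left₀ _ h2ne]
  intro n
  simpa [Subring.mem_bot, eq_comm] using hW.apply_mem (S := ⊥) h1 h2ne
    (Subring.mem_bot.2 ⟨a, ha.symm⟩) (Subring.mem_bot.2 ⟨b, hb.symm⟩)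
    (Subring.mem_bot.2 ⟨d, h4.symm⟩) n

theorem ellnet_integrality (W : ℤ → ℚ) (hW : IsEllipticNetRel W)
    (h1 : W 1 = 1) (h2ne : W 2 ≠ 0)
    (h2 : ∃ a : ℤ, W 2 = a) (h3 : ∃ b : ℤ, W 3 = b) (h4 : ∃ c : ℤ, W 4 = c)
    (hdvd : ∃ d : ℤ, W 4 = W 2 * d) :
    ∀ n : ℤ, ∃ m : ℤ, W n = m :=
  ellnet_integrality_general W hW h1 h2ne h2 h3 hdvd
end

section
/- Fix a lattice Λ ⊂ ℂ with quasi-period homomorphism η : Λ → ℂ and the sign λ(ω) = 1 if ω ∈ 2Λ, λ(ω) = −1 otherwise. Using the sigma transformation σ(z+ω) = λ(ω) e^{η(ω)(z + ω/2)} σ(z), the function Ω_v(z_1,...,z_n) = σ(∑ v_i z_i) / ( ∏_i σ(z_i)^{2v_i² − ∑_j v_i v_j} ∏_{i<j} σ(z_i+z_j)^{v_i v_j} ) is elliptic in each variable: Ω_v(z_1 + ω, z_2, ..., z_n) = Ω_v(z_1, ..., z_n) for all ω ∈ Λ. -/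
open Classical in
/-- The sign λ(ω): 1 if ω ∈ 2Λ, −1 otherwise. -/
noncomputable def lamSign (Λ : Submodule ℤ ℂ) (ω : Λ) : ℂ :=
  if ∃ u : Λ, (ω : ℂ) = 2 * (u : ℂ) then 1 else -1

/-- The net function Ω_v attached to σ and points z₁, …, z_n. -/
noncomputable def OmegaFun {n : ℕ} (σ : ℂ → ℂ) (z : Fin n → ℂ) (v : Fin n → ℤ) : ℂ :=
  σ (∑ i, (v i : ℂ) * z i) /
    ((∏ i, σ (z i) ^ (2 * v i ^ 2 - ∑ j, v i * v j)) *
      ∏ p ∈ Finset.univ.filter (fun p : Fin n × Fin n => p.1 < p.2),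
        σ (z p.1 + z p.2) ^ (v p.1 * v p.2))

/-!
By the transformation law, together with `λ(mω) = λ(ω) ^ (m²)` and `η(mω) = m η(ω)`, translating
the argument of `σ` by `mω` multiplies it by `exp (m² a + m b w)`, where `a = log λ(ω) + η(ω) ω / 2`
and `b = η(ω)` depend on `ω` only. Shifting `z_k` by `ω` therefore multiplies the numerator of
`Ω_v` by `exp (v_k² a + v_k b ∑ v_i z_i)`, and the denominator by the exponential of
`e_k (a + b z_k) + ∑_{j ≠ k} v_k v_j (a + b (z_k + z_j))`, where `e_k = 2 v_k² - v_k ∑_j v_j`.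
The two exponents agree: in both the coefficient of `a` is `v_k²` and that of `b` is
`v_k ∑ v_i z_i`.
-/

open Complex Finset Function

section LamSign

variable (Λ : Submodule ℤ ℂ)

lemma lamSign_eq_one_or_eq_neg_one (ω : Λ) : lamSign Λ ω = 1 ∨ lamSign Λ ω = -1 := by
  unfold lamSign; split_ifs <;> simp

lemma lamSign_ne_zero (ω : Λ) : lamSign Λ ω ≠ 0 := by
  rcases lamSign_eq_one_or_eq_neg_one Λ ω with h | h <;> simp [h]

lemma lamSign_zero : lamSign Λ 0 = 1 :=
  if_pos ⟨0, by simp⟩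

lemma lamSign_add_two_zsmul (ω u : Λ) : lamSign Λ (ω + (2 : ℤ) • u) = lamSign Λ ω := by
  have h : (∃ u' : Λ, ((ω + (2 : ℤ) • u : Λ) : ℂ) = 2 * u') ↔ ∃ u' : Λ, (ω : ℂ) = 2 * u' := by
    constructor
    · rintro ⟨u', h⟩
      exact ⟨u' - u, by push_cast at h ⊢; linear_combination h⟩
    · rintro ⟨u', h⟩
      exact ⟨u' + u, by push_cast; linear_combination h⟩
  unfold lamSign
  split_ifs <;> tauto

lemma lamSign_zsmul (ω : Λ) (m : ℤ) : lamSign Λ (m • ω) = lamSign Λ ω ^ (m ^ 2) := by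
  rcases Int.even_or_odd' m with ⟨c, rfl | rfl⟩
  · have hsq : Even ((2 * c) ^ 2) := ⟨2 * c ^ 2, by ring⟩
    rw [mul_smul, ← zero_add ((2 : ℤ) • c • ω), lamSign_add_two_zsmul, lamSign_zero]
    rcases lamSign_eq_one_or_eq_neg_one Λ ω with h | h <;> simp [h, hsq.neg_one_zpow]
  · have hsq : Odd ((2 * c + 1) ^ 2) := ⟨2 * c ^ 2 + 2 * c, by ring⟩
    rw [add_smul, one_smul, mul_smul, add_comm, lamSign_add_two_zsmul]
    rcases lamSign_eq_one_or_eq_neg_one Λ ω with h | h <;> simp [h, hsq.neg_one_zpow]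

end LamSign

theorem sigma_add_intCast_mul (Λ : Submodule ℤ ℂ) (η : Λ →+ ℂ) (σ : ℂ → ℂ)
    (hσ : ∀ (w : ℂ) (ω : Λ),
      σ (w + (ω : ℂ)) = lamSign Λ ω * exp (η ω * (w + (ω : ℂ) / 2)) * σ w)
    (ω : Λ) (m : ℤ) (w : ℂ) :
    σ (w + m * ω) = exp (m ^ 2 * (log (lamSign Λ ω) + η ω * ω / 2) + m * η ω * w) * σ w := by
  have hmω : (m : ℂ) * ω = ((m • ω : Λ) : ℂ) := by push_cast [zsmul_eq_mul]; ring
  have hlam : lamSign Λ ω ^ (m ^ 2) = exp (((m ^ 2 : ℤ) : ℂ) * log (lamSign Λ ω)) := by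
    rw [exp_int_mul, exp_log (lamSign_ne_zero Λ ω)]
  rw [hmω, hσ, lamSign_zsmul, hlam, map_zsmul, ← exp_add, ← hmω]
  congr 2
  push_cast [zsmul_eq_mul]
  ring

theorem Finset.prod_filter_lt_ite_eq_or_eq {ι M : Type*} [Fintype ι] [LinearOrder ι]
    [DecidableEq ι] [CommMonoid M] (G : ι → ι → M) (hG : ∀ i j, G i j = G j i) (k : ι) :
    ∏ p ∈ univ.filter (fun p : ι × ι => p.1 < p.2),
        (if p.1 = k ∨ p.2 = k then G p.1 p.2 else 1) = ∏ j ∈ univ.erase k, G k j := by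
  have hpairs : univ.filter (fun p : ι × ι => p.1 < p.2 ∧ (p.1 = k ∨ p.2 = k)) =
      (univ.erase k).image fun j => (min k j, max k j) := by
    ext ⟨i, j⟩
    simp only [mem_filter, mem_univ, true_and, mem_image, mem_erase, ne_eq, and_true,
      Prod.mk.injEq]
    constructor
    · rintro ⟨hij, rfl | rfl⟩
      · exact ⟨j, hij.ne', by simp [hij.le]⟩
      · exact ⟨i, hij.ne, by simp [hij.le]⟩
    · rintro ⟨l, hl, rfl, rfl⟩
      rcases lt_or_gt_of_ne hl with h | h <;> simp [h, h.le]
  rw [← prod_filter, filter_filter, hpairs, prod_image]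
  · refine prod_congr rfl fun j _ => ?_
    rcases le_total k j with h | h
    · simp [h]
    · simp [h, hG k j]
  · intro i hi j hj hij
    simp only [Prod.mk.injEq] at hij
    rcases le_total k i with h | h <;> rcases le_total k j with h' | h' <;> simp_all

section UpdateAdd

variable {ι M : Type*} [DecidableEq ι] [AddCommMonoid M]

lemma update_add_apply (z : ι → M) (k i : ι) (t : M) :
    update z k (z k + t) i = z i + if i = k then t else 0 := by
  by_cases h : i = k
  · subst h; simp
  · simp [h]

lemma update_add_apply_add_apply (z : ι → M) {i j : ι} (hij : i ≠ j) (k : ι) (t : M) :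
    update z k (z k + t) i + update z k (z k + t) j =
      z i + z j + if i = k ∨ j = k then t else 0 := by
  by_cases hi : i = k
  · subst hi; simp [Ne.symm hij, add_right_comm]
  by_cases hj : j = k
  · subst hj; simp [hij, add_assoc]
  simp [hi, hj]

lemma sum_intCast_mul_update_add [Fintype ι] (v : ι → ℤ) (z : ι → ℂ) (k : ι) (t : ℂ) :
    ∑ i, (v i : ℂ) * update z k (z k + t) i = ∑ i, (v i : ℂ) * z i + v k * t := by
  simp only [update_add_apply, mul_add, sum_add_distrib, mul_ite, mul_zero, sum_ite_eq',
    mem_univ, if_true]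

end UpdateAdd

section QuadraticLaw

variable {ι : Type*} [Fintype ι] [DecidableEq ι] {σ : ℂ → ℂ} {a b t : ℂ}

lemma sigma_add_ite_zpow (hσ : ∀ w, σ (w + t) = exp (a + b * w) * σ w) (P : Prop) [Decidable P]
    (x : ℂ) (e : ℤ) :
    σ (x + if P then t else 0) ^ e = (if P then exp (e * (a + b * x)) else 1) * σ x ^ e := by
  split_ifs <;> simp [hσ, mul_zpow, ← exp_int_mul]

lemma prod_sigma_update_add_zpow (hσ : ∀ w, σ (w + t) = exp (a + b * w) * σ w) (z : ι → ℂ)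
    (k : ι) (e : ι → ℤ) :
    ∏ i, σ (update z k (z k + t) i) ^ e i = exp (e k * (a + b * z k)) * ∏ i, σ (z i) ^ e i := by
  simp only [update_add_apply, sigma_add_ite_zpow hσ, prod_mul_distrib, prod_ite_eq', mem_univ,
    if_true]

lemma prod_pairs_sigma_update_add_zpow [LinearOrder ι]
    (hσ : ∀ w, σ (w + t) = exp (a + b * w) * σ w) (z : ι → ℂ) (k : ι) (v : ι → ℤ) :
    ∏ p ∈ univ.filter (fun p : ι × ι => p.1 < p.2),
        σ (update z k (z k + t) p.1 + update z k (z k + t) p.2) ^ (v p.1 * v p.2) =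
      exp (∑ j ∈ univ.erase k, ((v k * v j : ℤ) : ℂ) * (a + b * (z k + z j))) *
        ∏ p ∈ univ.filter (fun p : ι × ι => p.1 < p.2), σ (z p.1 + z p.2) ^ (v p.1 * v p.2) := by
  rw [prod_congr rfl fun p hp => by
      rw [update_add_apply_add_apply z (mem_filter.1 hp).2.ne, sigma_add_ite_zpow hσ],
    prod_mul_distrib,
    prod_filter_lt_ite_eq_or_eq (fun i j => exp (((v i * v j : ℤ) : ℂ) * (a + b * (z i + z j))))
      (fun i j => by rw [mul_comm (v i), add_comm (z i)]),
    exp_sum]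

end QuadraticLaw

lemma omegaFun_exponent_eq {ι : Type*} [Fintype ι] [DecidableEq ι] (v : ι → ℤ) (z : ι → ℂ)
    (k : ι) (a b : ℂ) :
    (v k : ℂ) ^ 2 * a + v k * b * ∑ i, (v i : ℂ) * z i =
      ((2 * v k ^ 2 - ∑ j, v k * v j : ℤ) : ℂ) * (a + b * z k) +
        ∑ j ∈ univ.erase k, ((v k * v j : ℤ) : ℂ) * (a + b * (z k + z j)) := by
  have hpairs : ∑ j, ((v k * v j : ℤ) : ℂ) * (a + b * (z k + z j)) =
      v k * (a + b * z k) * ∑ j, (v j : ℂ) + v k * b * ∑ j, (v j : ℂ) * z j := by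
    rw [mul_sum, mul_sum, ← sum_add_distrib]
    exact sum_congr rfl fun j _ => by push_cast; ring
  rw [sum_erase_eq_sub (mem_univ k), hpairs]
  push_cast
  rw [← mul_sum]
  ring

theorem omegaFun_update_add {n : ℕ} {σ : ℂ → ℂ} {a b t : ℂ}
    (hσ : ∀ (m : ℤ) (w : ℂ), σ (w + m * t) = exp (m ^ 2 * a + m * b * w) * σ w)
    (z : Fin n → ℂ) (v : Fin n → ℤ) (k : Fin n) :
    OmegaFun σ (update z k (z k + t)) v = OmegaFun σ z v := by
  have hσ₁ (w : ℂ) : σ (w + t) = exp (a + b * w) * σ w := by simpa using hσ 1 w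
  rw [OmegaFun, OmegaFun, sum_intCast_mul_update_add, hσ,
    prod_sigma_update_add_zpow hσ₁ z k (fun i => 2 * v i ^ 2 - ∑ j, v i * v j),
    prod_pairs_sigma_update_add_zpow hσ₁ z k v, omegaFun_exponent_eq, exp_add, mul_mul_mul_comm,
    mul_div_mul_left _ _ (mul_ne_zero (exp_ne_zero _) (exp_ne_zero _))]

theorem omegaFun_elliptic_in_each_variable_general (Λ : Submodule ℤ ℂ) (η : Λ →+ ℂ) (σ : ℂ → ℂ)
    (hσ : ∀ (w : ℂ) (ω : Λ),
      σ (w + (ω : ℂ)) = lamSign Λ ω * Complex.exp (η ω * (w + (ω : ℂ) / 2)) * σ w)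
    {n : ℕ} (z : Fin n → ℂ) :
    ∀ (v : Fin n → ℤ) (k : Fin n) (ω : Λ),
      OmegaFun σ (Function.update z k (z k + (ω : ℂ))) v = OmegaFun σ z v := by
  intro v k ω
  exact omegaFun_update_add (sigma_add_intCast_mul Λ η σ hσ ω) z v k

theorem omegaFun_elliptic_in_each_variable (Λ : Submodule ℤ ℂ) [DiscreteTopology Λ]
    [IsZLattice ℝ Λ] (η : Λ →+ ℂ) (σ : ℂ → ℂ)
    (hσ : ∀ (w : ℂ) (ω : Λ),
      σ (w + (ω : ℂ)) = lamSign Λ ω * Complex.exp (η ω * (w + (ω : ℂ) / 2)) * σ w)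
    (hlam : ∀ ω₁ ω₂ : Λ,
      lamSign Λ (ω₁ + ω₂) * lamSign Λ (ω₁ - ω₂) = lamSign Λ ω₁ ^ 2 * lamSign Λ ω₂ ^ 2)
    {n : ℕ} (z : Fin n → ℂ)
    (hz : ∀ i, σ (z i) ≠ 0)
    (hz2 : ∀ i j : Fin n, i ≠ j → σ (z i + z j) ≠ 0) :
    ∀ (v : Fin n → ℤ) (k : Fin n) (ω : Λ),
      OmegaFun σ (Function.update z k (z k + (ω : ℂ))) v = OmegaFun σ z v :=
  omegaFun_elliptic_in_each_variable_general Λ η σ hσ z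
end
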